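/- Every class of finite pointed (Π,I)-Kripke models definable by a countable disjunction of graded multimodal formulae is recognizable by a counting multichannel message passing automaton for (Π,I): there is a CMMPA (namely a type automaton with suitable accepting states) that accepts exactly the pointed models satisfying the disjunction. -/
import Mathlib


/-- Syntax of graded multimodal logic over propositions `P` and indices `I`. -/
inductive GMML (P : Type) (I : Type) : Type
  | top : GMML P I
  | prop : P → GMML P I
  | neg : GMML P I → GMML P I
  | and : GMML P I → GMML P I → GMML P I
  | dia : I → ℕ → GMML P I → GMML P I

/-- Satisfaction of a GMML formula at a point of a Kripke model. -/
def GMML.Sat {P I W : Type} (R : I → W → W → Prop) (V : P → W → Prop) :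
    W → GMML P I → Prop
  | _, .top => True
  | w, .prop p => V p w
  | w, .neg φ => ¬ GMML.Sat R V w φ
  | w, .and φ ψ => GMML.Sat R V w φ ∧ GMML.Sat R V w ψ
  | w, .dia α k φ => k ≤ {v | R α w v ∧ GMML.Sat R V v φ}.ncard

/-- Modal depth of a GMML formula. -/
def GMML.md {P I : Type} : GMML P I → ℕ
  | .top => 0
  | .prop _ => 0
  | .neg φ => φ.md
  | .and φ ψ => max φ.md ψ.md
  | .dia _ _ φ => φ.md + 1

/-- A finite pointed Kripke model of vocabulary `(P, I)`. -/
structure PKModel (P I : Type) where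
  W : Type
  fin : Finite W
  R : I → W → W → Prop
  V : P → W → Prop
  pt : W

/-- Satisfaction at the distinguished point of a pointed model. -/
def PKModel.Sat {P I : Type} (M : PKModel P I) (φ : GMML P I) : Prop :=
  GMML.Sat M.R M.V M.pt φ

/-- A counting multichannel message passing automaton for `(P, I)` with states `Q`. -/
structure CMMPA (P I Q : Type) where
  π : Set P → Q
  δ : (I → Multiset Q) → Q → Q
  F : Set Q

open Classical in
/-- The run of a CMMPA on a Kripke model: `run A R V t w` is the state of node `w`
in round `t`; in each round a node receives the multiset of previous states of its
`α`-successors along each channel `α`. -/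
noncomputable def CMMPA.run {P I Q W : Type} [Fintype W] (A : CMMPA P I Q)
    (R : I → W → W → Prop) (V : P → W → Prop) : ℕ → W → Q
  | 0, w => A.π {p | V p w}
  | t + 1, w =>
      A.δ (fun α =>
        ((Finset.univ : Finset W).filter fun v => R α w v).val.map
          (CMMPA.run A R V t))
        (CMMPA.run A R V t w)

/-- The run of a CMMPA on a finite pointed Kripke model. -/
noncomputable def PKModel.run {P I Q : Type} (M : PKModel P I) (A : CMMPA P I Q)
    (t : ℕ) (w : M.W) : Q :=
  haveI := M.fin
  letI : Fintype M.W := Fintype.ofFinite M.W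
  A.run M.R M.V t w

def Ty (P I : Type) : ℕ → Type
  | 0 => Set P
  | n+1 => Set P × (I → Multiset (Ty P I n))

def Ty.dflt (P I : Type) : ∀ n, Ty P I n
  | 0 => (∅ : Set P)
  | _+1 => ((∅ : Set P), fun _ => 0)

instance TyCountable (P I : Type) [Fintype P] [Fintype I] : ∀ n, Countable (Ty P I n)
  | 0 => by unfold Ty; infer_instance
  | n+1 => by
      haveI := TyCountable P I n
      unfold Ty; infer_instance

def propsOf (P I : Type) : ∀ n, Ty P I n → Set P
  | 0, τ => τ
  | _+1, τ => τ.1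

noncomputable def down (P I : Type) (n : ℕ) : (Σ m, Ty P I m) → Ty P I n :=
  fun x => if h : x.1 = n then h ▸ x.2 else Ty.dflt P I n

@[simp] lemma down_mk (P I : Type) (n : ℕ) (σ : Ty P I n) :
    down P I n ⟨n, σ⟩ = σ := by simp [down]

open Classical in
noncomputable def Tsat {P I : Type} : ∀ (n : ℕ), Ty P I n → GMML P I → Prop
  | _, _, .top => True
  | n, τ, .prop p => p ∈ propsOf P I n τ
  | n, τ, .neg φ => ¬ Tsat n τ φ
  | n, τ, .and φ ψ => Tsat n τ φ ∧ Tsat n τ ψ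
  | 0, _, .dia _ _ _ => False
  | n+1, τ, .dia α k φ =>
      k ≤ Multiset.countP (fun σ => Tsat n σ φ)
        ((show Set P × (I → Multiset (Ty P I n)) from τ).2 α)

open Classical in
noncomputable def typ {P I W : Type} [Fintype W] (R : I → W → W → Prop)
    (V : P → W → Prop) : ∀ n, W → Ty P I n
  | 0, w => {p | V p w}
  | n+1, w => ({p | V p w},
      fun α => ((Finset.univ : Finset W).filter fun v => R α w v).val.map (typ R V n))

@[simp] lemma propsOf_typ {P I W : Type} [Fintype W] (R : I → W → W → Prop)
    (V : P → W → Prop) (n : ℕ) (w : W) :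
    propsOf P I n (typ R V n w) = {p | V p w} := by
  cases n <;> rfl

open Classical in
lemma Tsat_typ {P I W : Type} [Fintype W] (R : I → W → W → Prop) (V : P → W → Prop) :
    ∀ (φ : GMML P I) (n : ℕ), φ.md ≤ n → ∀ w,
      (Tsat n (typ R V n w) φ ↔ GMML.Sat R V w φ) := by
  intro φ
  induction φ with
  | top => intro n _ w; simp [Tsat, GMML.Sat]
  | prop p =>
      intro n _ w
      simp [Tsat, GMML.Sat]
  | neg φ ih =>
      intro n hn w
      simp only [Tsat, GMML.Sat]
      exact not_congr (ih n hn w)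
  | and φ ψ ihφ ihψ =>
      intro n hn w
      simp only [Tsat, GMML.Sat]
      exact and_congr (ihφ n (le_trans (le_max_left _ _) hn) w)
        (ihψ n (le_trans (le_max_right _ _) hn) w)
  | dia α k φ ih =>
      intro n hn w
      obtain ⟨m, rfl⟩ : ∃ m, n = m + 1 := by
        cases n with
        | zero => exact absurd hn (by simp [GMML.md])
        | succ m => exact ⟨m, rfl⟩
      have hm : φ.md ≤ m := Nat.succ_le_succ_iff.mp hn
      show (k ≤ Multiset.countP (fun σ => Tsat m σ φ)
          (((Finset.univ : Finset W).filter fun v => R α w v).val.map (typ R V m)))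
        ↔ (k ≤ {v | R α w v ∧ GMML.Sat R V v φ}.ncard)
      have h1 : Multiset.countP (fun σ => Tsat m σ φ)
          (((Finset.univ : Finset W).filter fun v => R α w v).val.map (typ R V m))
          = {v | R α w v ∧ GMML.Sat R V v φ}.ncard := by
        rw [Multiset.countP_map, ← Finset.filter_val, Finset.filter_filter]
        rw [Set.ncard_eq_toFinset_card', Set.toFinset_setOf]
        rw [← Finset.card_def]
        congr 1
        apply Finset.filter_congr
        intro v _
        simp [ih m hm v]
      rw [h1]
noncomputable def typeAut (P I : Type) (S : Set (GMML P I)) :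
    CMMPA P I (Σ n, Ty P I n) where
  π := fun s => ⟨0, s⟩
  δ := fun msgs q =>
    ⟨q.1 + 1, (propsOf P I q.1 q.2, fun α => (msgs α).map (down P I q.1))⟩
  F := {q | ∃ φ ∈ S, φ.md ≤ q.1 ∧ Tsat q.1 q.2 φ}

open Classical in
lemma run_typeAut {P I W : Type} [Fintype W] (S : Set (GMML P I))
    (R : I → W → W → Prop) (V : P → W → Prop) :
    ∀ (t : ℕ) (w : W), (typeAut P I S).run R V t w = ⟨t, typ R V t w⟩ := by
  intro t
  induction t with
  | zero => intro w; rfl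
  | succ t ih =>
      intro w
      show (typeAut P I S).δ _ _ = _
      rw [show (fun α => ((Finset.univ : Finset W).filter fun v => R α w v).val.map
            ((typeAut P I S).run R V t))
          = fun α => ((Finset.univ : Finset W).filter fun v => R α w v).val.map
            (fun v => (⟨t, typ R V t v⟩ : Σ n, Ty P I n)) by
        funext α; congr 1; funext v; exact ih v]
      rw [ih w]
      show (⟨t + 1, (propsOf P I t (typ R V t w), fun α =>
          (((Finset.univ : Finset W).filter fun v => R α w v).val.map
            (fun v => (⟨t, typ R V t v⟩ : Σ n, Ty P I n))).map (down P I t))⟩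
        : Σ n, Ty P I n) = _
      congr 1
      show (_, _) = ((_ : Set P), _)
      refine Prod.ext (propsOf_typ R V t w) ?_
      funext α
      dsimp only
      rw [Multiset.map_map]
      congr 1
      funext v
      exact down_mk P I t (typ R V t v)

/-- every class of finite pointed models definable by a countable
disjunction of GMML formulae is recognizable by a counting multichannel message
passing automaton (with a countable state set). -/

theorem definable_implies_recognizable {P I : Type} [Fintype P] [Fintype I]
    (S : Set (GMML P I)) (hS : S.Countable) :
    ∃ (Q : Type) (_ : Countable Q) (A : CMMPA P I Q),
      ∀ M : PKModel P I,
        (∃ t : ℕ, M.run A t M.pt ∈ A.F) ↔ (∃ φ ∈ S, M.Sat φ) := by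
  refine ⟨Σ n, Ty P I n, inferInstance, typeAut P I S, fun M => ?_⟩
  haveI := M.fin
  letI : Fintype M.W := Fintype.ofFinite M.W
  have hrun : ∀ t, M.run (typeAut P I S) t M.pt
      = (⟨t, typ M.R M.V t M.pt⟩ : Σ n, Ty P I n) := fun t => run_typeAut S M.R M.V t M.pt
  constructor
  · rintro ⟨t, ht⟩
    rw [hrun t] at ht
    obtain ⟨φ, hφS, hmd, hTsat⟩ := ht
    exact ⟨φ, hφS, (Tsat_typ M.R M.V φ t hmd M.pt).mp hTsat⟩
  · rintro ⟨φ, hφS, hsat⟩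
    refine ⟨φ.md, ?_⟩
    rw [hrun φ.md]
    exact ⟨φ, hφS, le_refl _, (Tsat_typ M.R M.V φ φ.md (le_refl _) M.pt).mpr hsat⟩
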